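/- arXiv:2507.22631 — 6 statements merged into one kernel-verified Lean document; each statement's English description precedes it below -/
import Mathlib

section
/- Let C be a multiset over G of cardinality a·b, where a, b ≥ 1 are integers. Then the decompositions of C as a product of two multisets, (A, B) with |A| = a, |B| = b and A·B = C, fall into at most (ab)!/(a!·b!) classes under the equivalence relation (A, B) ≈ (A', B') iff A ~ A' and B ~ B'. Precisely: there exists a set S of such pairs with |S| ≤ (ab)!/(a!·b!) such that every pair (A, B) of multisets over G with |A| = a, |B| = b and A·B = C satisfies A ~ A' and B ~ B' for some (A', B') ∈ S. -/
/-!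
Index `C` by `c : Fin a × Fin b → G`. A decomposition `C = A·B` with `A = {u i}`, `B = {w j}` is
then a permutation `e` of the index set with `c (e (i, j)) = u i * w j`. Fix a pivot `z`; with
`(i₀, j₀) = e⁻¹ z`, the column `{c (e (i, j₀)) / c z}` of the table `c ∘ e` is `A` rescaled by
`(u i₀)⁻¹` and the row `{c (e (i₀, j))}` is `B` rescaled by `u i₀`. This row/column pair is
unchanged when `e` is precomposed with `σ × τ`, `σ ∈ Perm (Fin a)`, `τ ∈ Perm (Fin b)`, and that
action is free, so the `(ab)!` permutations `e` yield at most `(ab)!/(a!·b!)` pairs.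
-/

/-- The multiset of pairwise products of elements of `A` and `B`
(counted with multiplicity), so that `Multiset.card (mulComb A B) =
Multiset.card A * Multiset.card B`. -/
def mulComb {G : Type*} [CommGroup G] (A B : Multiset G) : Multiset G :=
  A.bind fun x => B.map fun y => x * y

/-- Two multisets over `G` are equivalent if one is obtained from the other by
rescaling every element by a fixed `ξ ∈ G`. -/
def MulEquivMultiset {G : Type*} [CommGroup G] (A A' : Multiset G) : Prop :=
  ∃ ξ : G, A.map (fun x => ξ * x) = A'

open Finset Function

theorem Multiset.exists_map_univ_eq {α ι : Type*} [Fintype ι] (M : Multiset α)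
    (h : Multiset.card M = Fintype.card ι) : ∃ f : ι → α, univ.val.map f = M := by
  classical
  have e : ι ≃ M := Fintype.equivOfCardEq (by rw [Multiset.card_coe, h])
  refine ⟨fun i => e i, ?_⟩
  conv_rhs => rw [← Multiset.map_univ_coe M, ← Multiset.map_univ_val_equiv e, Multiset.map_map]
  rfl

theorem exists_equiv_of_map_univ_eq {α ι κ : Type*} [Fintype ι] [Fintype κ] {f : ι → α}
    {g : κ → α} (h : univ.val.map f = univ.val.map g) : ∃ e : ι ≃ κ, ∀ i, g (e i) = f i := by
  classical
  have hfibre : ∀ x, Fintype.card {i // f i = x} = Fintype.card {k // g k = x} := fun x => by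
    have := congrArg (Multiset.count x) h
    simp only [Multiset.count_map, eq_comm (a := x)] at this
    rw [Fintype.card_subtype, Fintype.card_subtype]
    exact this
  exact ⟨Equiv.ofFiberEquiv fun x => Fintype.equivOfCardEq (hfibre x), Equiv.ofFiberEquiv_map _⟩

theorem mulComb_map_univ {G ι κ : Type*} [CommGroup G] [Fintype ι] [Fintype κ]
    (u : ι → G) (w : κ → G) :
    mulComb (univ.val.map u) (univ.val.map w) = univ.val.map fun p : ι × κ => u p.1 * w p.2 := by
  rw [← univ_product_univ, product_val]
  simp only [mulComb, SProd.sprod, Multiset.product, Multiset.map_bind, Multiset.map_map,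
    Multiset.bind_map, Function.comp]

theorem card_image_mul_card_le_card {X Y H : Type*} [Fintype X] [Fintype H] [DecidableEq Y]
    (F : X → Y) (act : H → X → X) (hF : ∀ h x, F (act h x) = F x)
    (hact : ∀ x, Injective (act · x)) :
    #(univ.image F) * Fintype.card H ≤ Fintype.card X := by
  rw [← card_univ (α := X), card_eq_sum_card_image F univ, ← smul_eq_mul]
  refine card_nsmul_le_sum _ _ _ fun y hy => ?_
  obtain ⟨x, -, rfl⟩ := mem_image.mp hy
  calc Fintype.card H = #(univ.map ⟨(act · x), hact x⟩) := by simp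
    _ ≤ _ := card_le_card fun x' hx' => by
      obtain ⟨h, -, rfl⟩ := mem_map.mp hx'
      simp [hF]

theorem Equiv.prodCongr_trans_injective {ι κ ν : Type*} [Nonempty ι] [Nonempty κ]
    (e : ι × κ ≃ ν) :
    Injective fun h : Equiv.Perm ι × Equiv.Perm κ => (h.1.prodCongr h.2).trans e := by
  rintro ⟨σ, τ⟩ ⟨σ', τ'⟩ h
  have h' : ∀ i j, (σ i, τ j) = (σ' i, τ' j) := fun i j => by
    simpa using congrArg (fun f : ι × κ ≃ ν => f (i, j)) h
  obtain ⟨i₀⟩ := ‹Nonempty ι›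
  obtain ⟨j₀⟩ := ‹Nonempty κ›
  exact Prod.ext (Equiv.ext fun i => congrArg Prod.fst (h' i j₀))
    (Equiv.ext fun j => congrArg Prod.snd (h' i₀ j))

section NormalizedFactors

variable {G ι κ : Type*} [CommGroup G] [Fintype ι] [Fintype κ]

def normalizedFactors (γ : ι × κ → G) (p : ι × κ) : Multiset G × Multiset G :=
  (univ.val.map fun i => γ (i, p.2) * (γ p)⁻¹, univ.val.map fun j => γ (p.1, j))

theorem normalizedFactors_comp_prodMap (γ : ι × κ → G) (σ : Equiv.Perm ι) (τ : Equiv.Perm κ)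
    (p : ι × κ) :
    normalizedFactors (γ ∘ Prod.map σ τ) p = normalizedFactors γ (Prod.map σ τ p) := by
  obtain ⟨i, j⟩ := p
  simp only [normalizedFactors, comp_apply, Prod.map_apply]
  congr 1
  · conv_rhs => rw [← Multiset.map_univ_val_equiv σ, Multiset.map_map]
    rfl
  · conv_rhs => rw [← Multiset.map_univ_val_equiv τ, Multiset.map_map]
    rfl

theorem normalizedFactors_prodCongr_trans {ν : Type*} (c : ν → G) (z : ν) (e : ι × κ ≃ ν)
    (σ : Equiv.Perm ι) (τ : Equiv.Perm κ) :
    normalizedFactors (c ∘ (σ.prodCongr τ).trans e) (((σ.prodCongr τ).trans e).symm z)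
      = normalizedFactors (c ∘ e) (e.symm z) := by
  calc _ = normalizedFactors ((c ∘ e) ∘ Prod.map σ τ) ((σ.prodCongr τ).symm (e.symm z)) := rfl
    _ = _ := by
      rw [normalizedFactors_comp_prodMap]
      exact congrArg _ ((σ.prodCongr τ).apply_symm_apply _)

theorem mulEquivMultiset_normalizedFactors (u : ι → G) (w : κ → G) (p : ι × κ) :
    MulEquivMultiset (univ.val.map u) (normalizedFactors (fun q => u q.1 * w q.2) p).1 ∧
      MulEquivMultiset (univ.val.map w) (normalizedFactors (fun q => u q.1 * w q.2) p).2 := by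
  refine ⟨⟨(u p.1)⁻¹, ?_⟩, ⟨u p.1, ?_⟩⟩ <;> simp only [normalizedFactors, Multiset.map_map]
  · congr 1
    funext i
    simp only [comp_apply, mul_inv_rev]
    rw [mul_comm, mul_assoc, mul_inv_cancel_left]
  · rfl

end NormalizedFactors

/-- Let `C` be a multiset over `G` of cardinality `a * b`, where
`a, b ≥ 1`. Then the decompositions `C = A·B` with `|A| = a`, `|B| = b` fall into
at most `(ab)!/(a!·b!)` equivalence classes: there is a set `S` of such pairs of
cardinality at most `(ab)!/(a!·b!)` such that every such pair `(A, B)` is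
componentwise equivalent to some member of `S`. -/
theorem stmt1 {G : Type*} [CommGroup G] (a b : ℕ) (ha : 1 ≤ a) (hb : 1 ≤ b)
    (C : Multiset G) (hC : Multiset.card C = a * b) :
    ∃ S : Finset (Multiset G × Multiset G),
      S.card ≤ (a * b).factorial / (a.factorial * b.factorial) ∧
      ∀ A B : Multiset G, Multiset.card A = a → Multiset.card B = b →
        mulComb A B = C →
        ∃ p ∈ S, MulEquivMultiset A p.1 ∧ MulEquivMultiset B p.2 := by
  classical
  have : NeZero a := ⟨by omega⟩
  have : NeZero b := ⟨by omega⟩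
  obtain ⟨c, hc⟩ := C.exists_map_univ_eq (ι := Fin a × Fin b) (by simpa using hC)
  let z : Fin a × Fin b := (0, 0)
  let F (e : Equiv.Perm (Fin a × Fin b)) := normalizedFactors (c ∘ e) (e.symm z)
  refine ⟨univ.image F, ?_, fun A B hA hB hAB => ?_⟩
  · have hcount := card_image_mul_card_le_card F
      (fun (h : Equiv.Perm (Fin a) × Equiv.Perm (Fin b)) e => (h.1.prodCongr h.2).trans e)
      (fun h e => normalizedFactors_prodCongr_trans c z e h.1 h.2)
      Equiv.prodCongr_trans_injective
    simp only [Fintype.card_prod, Fintype.card_perm, Fintype.card_fin] at hcount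
    exact (Nat.le_div_iff_mul_le (by positivity)).mpr hcount
  · obtain ⟨u, rfl⟩ := A.exists_map_univ_eq (ι := Fin a) (by simpa using hA)
    obtain ⟨w, rfl⟩ := B.exists_map_univ_eq (ι := Fin b) (by simpa using hB)
    rw [mulComb_map_univ, ← hc] at hAB
    obtain ⟨e, he⟩ := exists_equiv_of_map_univ_eq hAB
    have hce : c ∘ e = fun q => u q.1 * w q.2 := funext he
    exact ⟨F e, mem_image_of_mem F (mem_univ e), by
      simpa only [F, hce] using mulEquivMultiset_normalizedFactors u w (e.symm z)⟩
end

section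
/- Let C be a nonempty finite multiset over G. Then there exist only finitely many inequivalent decompositions of C as a product C = A₁·…·A_k with k ≥ 1 and each multiset A_i of cardinality |A_i| > 1. Precisely: there exists a finite set S of finite lists of multisets over G such that for every k ≥ 1 and every tuple (A₁,…,A_k) of multisets over G with each |A_i| > 1 and A₁·…·A_k = C, there is a tuple (B₁,…,B_k) ∈ S and a permutation τ of {1,…,k} with A_{τ(i)} ~ B_i for every i. (Two decompositions (A₁,…,A_k), (B₁,…,B_l) are called equivalent iff k = l and, after a permutation of indices, A_i ~ B_i for every i.) -/
/-- The product `A₁·…·A_k` of a list of multisets over `G`. -/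
def prodComb {G : Type*} [CommGroup G] (L : List (Multiset G)) : Multiset G :=
  L.foldr mulComb {1}

/-!
Rescale every factor `Aᵢ` by the inverse of one of its elements. Since `Aᵢ · tᵢ ⊆ C` for some
`tᵢ`, the rescaled factor is a multiset of quotients `c / c'` of elements of `C`, of size at most
`|C|`; and there are at most `|C|` factors because `2 ^ k ≤ |C|`. So the rescaled decompositions
range over a finite set.
-/

open Pointwise

section Finiteness

variable {α : Type*} {s : Set α}

theorem Set.Finite.lists_length_le (hs : s.Finite) (n : ℕ) :
    {l : List α | l.length ≤ n ∧ ∀ x ∈ l, x ∈ s}.Finite := by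
  have := hs.to_subtype
  refine ((List.finite_length_le s n).image (List.map (↑))).subset ?_
  rintro l ⟨hlen, hmem⟩
  exact ⟨l.pmap Subtype.mk hmem, by simpa using hlen, by simp [List.map_pmap]⟩

theorem Set.Finite.multisets_card_le (hs : s.Finite) (n : ℕ) :
    {m : Multiset α | Multiset.card m ≤ n ∧ ∀ x ∈ m, x ∈ s}.Finite := by
  refine ((hs.lists_length_le n).image (↑)).subset ?_
  rintro m ⟨hcard, hmem⟩
  exact ⟨m.toList, by simpa using ⟨hcard, hmem⟩, Multiset.coe_toList m⟩

end Finiteness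

section Decompositions

variable {G : Type*} [CommGroup G]

theorem mem_mulComb {A B : Multiset G} {x : G} :
    x ∈ mulComb A B ↔ ∃ a ∈ A, ∃ b ∈ B, a * b = x := by
  simp [mulComb]

theorem card_mulComb (A B : Multiset G) :
    Multiset.card (mulComb A B) = Multiset.card A * Multiset.card B := by
  simp [mulComb]

theorem mulComb_eq_zero {A B : Multiset G} : mulComb A B = 0 ↔ A = 0 ∨ B = 0 := by
  simp only [← Multiset.card_eq_zero, card_mulComb, mul_eq_zero]

theorem prodComb_cons (A : Multiset G) (L : List (Multiset G)) :
    prodComb (A :: L) = mulComb A (prodComb L) :=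
  rfl

theorem card_prodComb (L : List (Multiset G)) :
    Multiset.card (prodComb L) = (L.map Multiset.card).prod := by
  induction L with
  | nil => simp [prodComb]
  | cons A L ih => simp_all [prodComb, card_mulComb]

theorem card_dvd_card_prodComb {L : List (Multiset G)} {A : Multiset G} (hA : A ∈ L) :
    Multiset.card A ∣ Multiset.card (prodComb L) :=
  card_prodComb L ▸ List.dvd_prod (List.mem_map_of_mem hA)

theorem length_lt_card_prodComb {L : List (Multiset G)} (hL : ∀ A ∈ L, 1 < Multiset.card A) :
    L.length < Multiset.card (prodComb L) := by
  rw [card_prodComb]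
  calc L.length < 2 ^ L.length := Nat.lt_two_pow_self
    _ = 2 ^ (L.map Multiset.card).length := by rw [List.length_map]
    _ ≤ (L.map Multiset.card).prod :=
      List.pow_card_le_prod _ _ (by simpa [Nat.succ_le_iff] using hL)

theorem exists_mul_mem_prodComb {L : List (Multiset G)} (hL : prodComb L ≠ 0)
    {A : Multiset G} (hA : A ∈ L) : ∃ t : G, ∀ a ∈ A, a * t ∈ prodComb L := by
  induction L with
  | nil => simp at hA
  | cons B L ih =>
    rw [prodComb_cons] at hL ⊢
    obtain ⟨hB, hL'⟩ := not_or.1 (mulComb_eq_zero.not.1 hL)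
    rcases List.mem_cons.1 hA with rfl | hA
    · obtain ⟨t, ht⟩ := Multiset.exists_mem_of_ne_zero hL'
      exact ⟨t, fun a ha => mem_mulComb.2 ⟨a, ha, t, ht, rfl⟩⟩
    · obtain ⟨t, ht⟩ := ih hL' hA
      obtain ⟨b, hb⟩ := Multiset.exists_mem_of_ne_zero hB
      exact ⟨b * t, fun a ha => mem_mulComb.2 ⟨b, hb, a * t, ht a ha, mul_left_comm b a t⟩⟩

noncomputable def rescaleToOne (A : Multiset G) : Multiset G :=
  A.map ((Classical.epsilon (· ∈ A))⁻¹ * ·)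

theorem mulEquivMultiset_rescaleToOne (A : Multiset G) : MulEquivMultiset A (rescaleToOne A) :=
  ⟨_, rfl⟩

theorem mem_div_of_mem_rescaleToOne {A : Multiset G} {s : Set G} {t : G}
    (ht : ∀ a ∈ A, a * t ∈ s) {x : G} (hx : x ∈ rescaleToOne A) : x ∈ s / s := by
  obtain ⟨a, ha, rfl⟩ := Multiset.mem_map.1 hx
  have hε : Classical.epsilon (· ∈ A) ∈ A := Classical.epsilon_spec ⟨a, ha⟩
  convert Set.div_mem_div (ht a ha) (ht _ hε) using 1
  rw [mul_div_mul_right_eq_div, inv_mul_eq_div]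

end Decompositions

/-- Let `C` be a nonempty finite multiset over `G`. There are
only finitely many inequivalent decompositions `C = A₁·…·A_k` with each
`|Aᵢ| > 1`: there is a finite set `S` of lists of multisets over `G` such that
every list `L = (A₁,…,A_k)` of multisets with each `|Aᵢ| > 1` and product `C` has
a permutation `L'` which is termwise equivalent to some member of `S` (of the
same length `k`). -/
theorem stmt2 {G : Type*} [CommGroup G] (C : Multiset G) (hC : C ≠ 0) :
    ∃ S : Finset (List (Multiset G)),
      ∀ L : List (Multiset G), L ≠ [] →
        (∀ A ∈ L, 1 < Multiset.card A) →
        prodComb L = C →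
        ∃ M ∈ S, ∃ L' : List (Multiset G), L.Perm L' ∧
          List.Forall₂ MulEquivMultiset L' M := by
  have hfin := ((C.finite_toSet.div C.finite_toSet).multisets_card_le
    (Multiset.card C)).lists_length_le (Multiset.card C)
  refine ⟨hfin.toFinset, fun L _ hcard hprod => ⟨L.map rescaleToOne, ?_, L, .refl L, ?_⟩⟩
  · subst hprod
    rw [Set.Finite.mem_toFinset]
    refine ⟨by simpa using (length_lt_card_prodComb hcard).le, ?_⟩
    rw [List.forall_mem_map]
    intro A hA
    obtain ⟨t, ht⟩ := exists_mul_mem_prodComb hC hA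
    refine ⟨?_, fun x hx => mem_div_of_mem_rescaleToOne ht hx⟩
    rw [rescaleToOne, Multiset.card_map]
    exact Nat.le_of_dvd (Multiset.card_pos.2 hC) (card_dvd_card_prodComb hA)
  · exact List.forall₂_map_right_iff.2
      (List.forall₂_same.2 fun A _ => mulEquivMultiset_rescaleToOne A)
end

section
/- Let q be a prime power, let k ≥ 1 be an integer, and let A₁,…,A_k be nonempty finite multisets of elements of ℚ̄ with n_i = |A_i|. Let w, w₁,…,w_k be integers. Suppose that every pairwise product α₁·α₂·⋯·α_k with α_i ∈ A_i (i.e. every element of the product multiset A₁·…·A_k) is a q-Weil number of weight w, and that for each i the full product ∏_{α ∈ A_i} α (with multiplicity) is a q-Weil number of weight w_i. Then for every i and every α ∈ A_i, the power α^{n_i} is a q-Weil number of weight w_i. -/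
/-!
For a fixed embedding `ι`, pick `βⱼ ∈ Aⱼ` for every `j`. Replacing `βᵢ` by any `γ ∈ Aᵢ` gives a
product of weight `w`, so `|ι γ|² · ∏_{j ≠ i} |ι βⱼ|² = q ^ w ≠ 0`; hence `|ι γ|` does not depend on
`γ ∈ Aᵢ`. The product of `Aᵢ` then has absolute value `|ι α| ^ nᵢ` for any `α ∈ Aᵢ`.
-/

open scoped BigOperators

/-- `α` is a `q`-Weil number of weight `w`: for every embedding
`ι : ℚ̄ → ℂ` we have `|ι α|² = q ^ w`. -/
def IsWeilNumber (q : ℕ) (w : ℤ) (α : AlgebraicClosure ℚ) : Prop :=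
  ∀ ι : AlgebraicClosure ℚ →+* ℂ, ‖ι α‖ ^ 2 = (q : ℝ) ^ w

open Finset Function

lemma map_multiset_prod_eq_map_pow_card {F M N : Type*} [CommMonoid M] [CommMonoid N]
    [FunLike F M N] [MonoidHomClass F M N] (f : F) {s : Multiset M} {a : M}
    (h : ∀ x ∈ s, f x = f a) : f s.prod = f (a ^ Multiset.card s) := by
  rw [map_multiset_prod, map_pow, Multiset.eq_replicate_of_mem (s := s.map f) (a := f a)
    (by simpa using h), Multiset.prod_replicate, Multiset.card_map]

section

variable {q : ℕ} {κ : Type*} [Fintype κ] {A : κ → Multiset (AlgebraicClosure ℚ)} {w : ℤ}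

lemma norm_embedding_eq_of_mem_of_forall_prod_isWeilNumber (hq : q ≠ 0) (hA : ∀ j, A j ≠ 0)
    (hprod : ∀ α : κ → AlgebraicClosure ℚ, (∀ j, α j ∈ A j) → IsWeilNumber q w (∏ j, α j))
    (ι : AlgebraicClosure ℚ →+* ℂ) {i : κ} {γ δ : AlgebraicClosure ℚ} (hγ : γ ∈ A i)
    (hδ : δ ∈ A i) : ‖ι γ‖ = ‖ι δ‖ := by
  classical
  choose β hβ using fun j => Multiset.exists_mem_of_ne_zero (hA j)
  set rest := ‖ι (∏ j ∈ univ \ {i}, β j)‖ ^ 2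
  have weil : ∀ x ∈ A i, ‖ι x‖ ^ 2 * rest = (q : ℝ) ^ w := fun x hx => by
    have h := hprod (update β i x) (fun j => by
      rcases eq_or_ne j i with rfl | hj
      · simpa using hx
      · simpa [hj] using hβ j) ι
    rwa [prod_update_of_mem (mem_univ i), map_mul, norm_mul, mul_pow] at h
  have hrest : rest ≠ 0 :=
    right_ne_zero_of_mul ((weil γ hγ).trans_ne (zpow_ne_zero _ (Nat.cast_ne_zero.2 hq)))
  have hsq := mul_right_cancel₀ hrest ((weil γ hγ).trans (weil δ hδ).symm)
  exact (pow_left_inj₀ (norm_nonneg _) (norm_nonneg _) two_ne_zero).1 hsq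

end

lemma IsWeilNumber.pow_card_of_forall_norm_eq {q : ℕ} {w : ℤ} {s : Multiset (AlgebraicClosure ℚ)}
    {α : AlgebraicClosure ℚ} (hs : IsWeilNumber q w s.prod)
    (hα : ∀ ι : AlgebraicClosure ℚ →+* ℂ, ∀ γ ∈ s, ‖ι γ‖ = ‖ι α‖) :
    IsWeilNumber q w (α ^ Multiset.card s) := fun ι => by
  rw [← hs ι]
  congr 1
  exact (map_multiset_prod_eq_map_pow_card ((normHom : ℂ →*₀ ℝ).comp ι.toMonoidWithZeroHom)
    (hα ι)).symm

theorem stmt3_general (q : ℕ) (hq : ∃ p m : ℕ, p.Prime ∧ 1 ≤ m ∧ q = p ^ m)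
    (k : ℕ)
    (A : Fin k → Multiset (AlgebraicClosure ℚ))
    (hA : ∀ i, A i ≠ 0)
    (w : ℤ) (wi : Fin k → ℤ)
    (hprod : ∀ α : Fin k → AlgebraicClosure ℚ, (∀ i, α i ∈ A i) →
      IsWeilNumber q w (∏ i, α i))
    (hfull : ∀ i, IsWeilNumber q (wi i) (A i).prod) :
    ∀ i, ∀ α ∈ A i, IsWeilNumber q (wi i) (α ^ Multiset.card (A i)) := by
  obtain ⟨p, m, hp, -, rfl⟩ := hq
  intro i α hα
  exact (hfull i).pow_card_of_forall_norm_eq fun ι γ hγ =>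
    norm_embedding_eq_of_mem_of_forall_prod_isWeilNumber (pow_ne_zero m hp.ne_zero) hA hprod ι
      hγ hα

/-- Let `q` be a prime power, `k ≥ 1`, and `A₁,…,A_k` nonempty
finite multisets of algebraic numbers with `nᵢ = |Aᵢ|`. Let `w, w₁,…,w_k` be
integers. If every pairwise product `α₁⋯α_k` with `αᵢ ∈ Aᵢ` is a `q`-Weil number
of weight `w`, and for each `i` the full product `∏_{α ∈ Aᵢ} α` (with
multiplicity) is a `q`-Weil number of weight `wᵢ`, then for every `i` and every
`α ∈ Aᵢ`, the power `α ^ nᵢ` is a `q`-Weil number of weight `wᵢ`. -/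
theorem stmt3 (q : ℕ) (hq : ∃ p m : ℕ, p.Prime ∧ 1 ≤ m ∧ q = p ^ m)
    (k : ℕ) (hk : 1 ≤ k)
    (A : Fin k → Multiset (AlgebraicClosure ℚ))
    (hA : ∀ i, A i ≠ 0)
    (w : ℤ) (wi : Fin k → ℤ)
    (hprod : ∀ α : Fin k → AlgebraicClosure ℚ, (∀ i, α i ∈ A i) →
      IsWeilNumber q w (∏ i, α i))
    (hfull : ∀ i, IsWeilNumber q (wi i) (A i).prod) :
    ∀ i, ∀ α ∈ A i, IsWeilNumber q (wi i) (α ^ Multiset.card (A i)) :=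
  stmt3_general q hq k A hA w wi hprod hfull
end

section
/- Let a be an integer with 1 ≤ a ≤ n, fix a subset J ⊆ {1,…,n+1} with |J| = a, and set v = Σ_{j∈J} e_j. Consider the finite nonempty set of real numbers { ⟪Σ_{i∈I} e_i, v⟫ : I ⊆ {1,…,n+1}, |I| = a, I ≠ J }. Its maximum equals ‖v‖² − 1 and its minimum equals ‖v‖² − min(a, n+1−a). -/
open scoped BigOperators RealInnerProductSpace

/-- The weights of the standard representation of `sl_{n+1}`: `e i` is the `i`-th
standard basis vector of `ℝ^{n+1}` minus the mean vector, so its `i`-th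
coordinate is `1 - 1/(n+1)` and its other coordinates are `-1/(n+1)`. -/
noncomputable def stdWeight (n : ℕ) (i : Fin (n + 1)) :
    EuclideanSpace ℝ (Fin (n + 1)) :=
  WithLp.toLp 2 (fun j => (if j = i then (1 : ℝ) else 0) - 1 / (n + 1))

/-!
Since `⟪e i, e j⟫ = δ i j - 1/(n+1)`, bilinearity gives, for `|I| = |J| = a`,
`⟪∑_{i ∈ I} e i, v⟫ = ‖v‖² - (a - |I ∩ J|)`. So the question is which overlaps `|I ∩ J|` occur
for `I ≠ J`: exactly the integers from `max 0 (2a - (n+1))` (forced by `|I ∪ J| ≤ n + 1`)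
to `a - 1`, and both ends are realised by taking part of `J` and filling up from its complement.
-/

section OverlapSizes

variable {α : Type*} [DecidableEq α]

def overlapSizes [Fintype α] (J : Finset α) : Set ℕ :=
  {k | ∃ I : Finset α, I.card = J.card ∧ I ≠ J ∧ (I ∩ J).card = k}

lemma card_inter_lt_of_card_eq_of_ne {I J : Finset α} (hI : I.card = J.card) (hne : I ≠ J) :
    (I ∩ J).card < J.card := by
  refine Finset.card_lt_card (Finset.inter_subset_right.ssubset_of_ne fun h => ?_)
  have hJI : J ⊆ I := h ▸ Finset.inter_subset_left
  exact hne (Finset.eq_of_subset_of_card_le hJI hI.le).symm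

variable [Fintype α]

lemma card_add_card_le_card_inter_add (I J : Finset α) :
    I.card + J.card ≤ (I ∩ J).card + Fintype.card α := by
  rw [← Finset.card_union_add_card_inter, add_comm]
  exact Nat.add_le_add_left (Finset.card_le_univ _) _

lemma exists_card_eq_card_inter_eq (J : Finset α) {a k : ℕ} (hkJ : k ≤ J.card) (hka : k ≤ a)
    (hak : a ≤ k + Jᶜ.card) : ∃ I : Finset α, I.card = a ∧ (I ∩ J).card = k := by
  obtain ⟨S, hSJ, hS⟩ := Finset.exists_subset_card_eq hkJ
  obtain ⟨T, hTJ, hT⟩ := Finset.exists_subset_card_eq (show a - k ≤ Jᶜ.card by omega)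
  have hTJ' : Disjoint T J := Finset.subset_compl_iff_disjoint_right.mp hTJ
  refine ⟨S ∪ T, ?_, ?_⟩
  · rw [Finset.card_union_of_disjoint (Finset.disjoint_of_subset_left hSJ hTJ'.symm), hS, hT]
    omega
  · rw [Finset.union_inter_distrib_right, Finset.inter_eq_left.mpr hSJ,
      Finset.disjoint_iff_inter_eq_empty.mp hTJ', Finset.union_empty, hS]

lemma mem_overlapSizes {J : Finset α} {k : ℕ} (hkJ : k < J.card)
    (hk : J.card ≤ k + Jᶜ.card) : k ∈ overlapSizes J := by
  obtain ⟨I, hI, hIJ⟩ := exists_card_eq_card_inter_eq J hkJ.le hkJ.le hk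
  refine ⟨I, hI, ?_, hIJ⟩
  rintro rfl
  rw [Finset.inter_self] at hIJ
  omega

lemma isGreatest_overlapSizes {J : Finset α} (h₀ : 0 < J.card) (hJ : J.card < Fintype.card α) :
    IsGreatest (overlapSizes J) (J.card - 1) := by
  refine ⟨mem_overlapSizes (by omega) ?_, ?_⟩
  · rw [Finset.card_compl]
    omega
  · rintro _ ⟨I, hI, hne, rfl⟩
    have := card_inter_lt_of_card_eq_of_ne hI hne
    omega

lemma isLeast_overlapSizes {J : Finset α} (h₀ : 0 < J.card) (hJ : J.card < Fintype.card α) :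
    IsLeast (overlapSizes J) (J.card - min J.card (Fintype.card α - J.card)) := by
  refine ⟨mem_overlapSizes (by omega) ?_, ?_⟩
  · rw [Finset.card_compl]
    omega
  · rintro _ ⟨I, hI, -, rfl⟩
    have := card_add_card_le_card_inter_add I J
    omega

end OverlapSizes

lemma inner_stdWeight (n : ℕ) (i j : Fin (n + 1)) :
    ⟪stdWeight n i, stdWeight n j⟫ = (if i = j then 1 else 0) - 1 / (n + 1) := by
  have hn : (n : ℝ) + 1 ≠ 0 := by positivity
  simp only [stdWeight, PiLp.inner_apply, RCLike.inner_apply, conj_trivial]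
  simp only [sub_mul, mul_sub, Finset.sum_sub_distrib, ite_mul, one_mul, zero_mul, mul_ite,
    mul_one, mul_zero, Finset.sum_ite_eq', Finset.mem_univ, if_true, Finset.sum_const,
    Finset.card_univ, Fintype.card_fin, nsmul_eq_mul]
  push_cast
  field_simp
  ring

lemma inner_sum_stdWeight (n : ℕ) (I J : Finset (Fin (n + 1))) :
    ⟪∑ i ∈ I, stdWeight n i, ∑ j ∈ J, stdWeight n j⟫ =
      (I ∩ J).card - I.card * J.card / (n + 1) := by
  rw [sum_inner]
  simp only [inner_sum, inner_stdWeight, Finset.sum_sub_distrib, Finset.sum_ite_eq,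
    Finset.sum_boole, Finset.filter_mem_eq_inter, Finset.sum_const, nsmul_eq_mul]
  ring

lemma norm_sum_stdWeight_sq (n : ℕ) (J : Finset (Fin (n + 1))) :
    ‖∑ j ∈ J, stdWeight n j‖ ^ 2 = J.card - J.card * J.card / (n + 1) := by
  rw [← real_inner_self_eq_norm_sq, inner_sum_stdWeight, Finset.inter_self]

lemma inner_sum_stdWeight_eq_norm_sq_sub {n : ℕ} {I J : Finset (Fin (n + 1))}
    (hIJ : I.card = J.card) :
    ⟪∑ i ∈ I, stdWeight n i, ∑ j ∈ J, stdWeight n j⟫ =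
      ‖∑ j ∈ J, stdWeight n j‖ ^ 2 - (J.card - (I ∩ J).card) := by
  rw [inner_sum_stdWeight, norm_sum_stdWeight_sq, hIJ]
  ring

lemma setOf_inner_sum_stdWeight_eq_image {n : ℕ} (J : Finset (Fin (n + 1))) :
    {x : ℝ | ∃ I : Finset (Fin (n + 1)), I.card = J.card ∧ I ≠ J ∧
        x = ⟪∑ i ∈ I, stdWeight n i, ∑ j ∈ J, stdWeight n j⟫} =
      (fun k : ℕ => ‖∑ j ∈ J, stdWeight n j‖ ^ 2 - (J.card - k)) '' overlapSizes J := by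
  ext x
  constructor
  · rintro ⟨I, hI, hne, rfl⟩
    exact ⟨_, ⟨I, hI, hne, rfl⟩, (inner_sum_stdWeight_eq_norm_sq_sub hI).symm⟩
  · rintro ⟨_, ⟨I, hI, hne, rfl⟩, rfl⟩
    exact ⟨I, hI, hne, (inner_sum_stdWeight_eq_norm_sq_sub hI).symm⟩

theorem stmt6_general (n : ℕ) (a : ℕ) (ha : 1 ≤ a) (han : a ≤ n)
    (J : Finset (Fin (n + 1))) (hJ : J.card = a) :
    IsGreatest
      {x : ℝ | ∃ I : Finset (Fin (n + 1)), I.card = a ∧ I ≠ J ∧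
        x = ⟪∑ i ∈ I, stdWeight n i, ∑ j ∈ J, stdWeight n j⟫}
      (‖∑ j ∈ J, stdWeight n j‖ ^ 2 - 1) ∧
    IsLeast
      {x : ℝ | ∃ I : Finset (Fin (n + 1)), I.card = a ∧ I ≠ J ∧
        x = ⟪∑ i ∈ I, stdWeight n i, ∑ j ∈ J, stdWeight n j⟫}
      (‖∑ j ∈ J, stdWeight n j‖ ^ 2 -
        min (a : ℝ) ((n : ℝ) + 1 - (a : ℝ))) := by
  subst hJ
  have h₀ : 0 < J.card := ha
  have hJn : J.card < Fintype.card (Fin (n + 1)) := by rw [Fintype.card_fin]; omega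
  rw [setOf_inner_sum_stdWeight_eq_image]
  set f : ℕ → ℝ := fun k => ‖∑ j ∈ J, stdWeight n j‖ ^ 2 - (J.card - k)
  have hf : Monotone f := fun k l hkl => by
    simp only [f]
    gcongr
  have hmax : f (J.card - 1) = ‖∑ j ∈ J, stdWeight n j‖ ^ 2 - 1 := by
    simp only [f]
    push_cast [ha]
    ring
  have hmin : f (J.card - min J.card (Fintype.card (Fin (n + 1)) - J.card)) =
      ‖∑ j ∈ J, stdWeight n j‖ ^ 2 - min (J.card : ℝ) ((n : ℝ) + 1 - J.card) := by
    simp only [f, Fintype.card_fin]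
    push_cast [min_le_left, han.trans n.le_succ]
    ring
  rw [← hmax, ← hmin]
  exact ⟨hf.map_isGreatest (isGreatest_overlapSizes h₀ hJn),
    hf.map_isLeast (isLeast_overlapSizes h₀ hJn)⟩

/-- Fix `1 ≤ a ≤ n` and `J ⊆ {1,…,n+1}` with `|J| = a`, and set
`v = ∑_{j ∈ J} e j`. The set `{⟪∑_{i ∈ I} e i, v⟫ : |I| = a, I ≠ J}` has maximum
`‖v‖² − 1` and minimum `‖v‖² − min(a, n+1−a)`. -/
theorem stmt6 (n : ℕ) (hn : 1 ≤ n) (a : ℕ) (ha : 1 ≤ a) (han : a ≤ n)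
    (J : Finset (Fin (n + 1))) (hJ : J.card = a) :
    IsGreatest
      {x : ℝ | ∃ I : Finset (Fin (n + 1)), I.card = a ∧ I ≠ J ∧
        x = ⟪∑ i ∈ I, stdWeight n i, ∑ j ∈ J, stdWeight n j⟫}
      (‖∑ j ∈ J, stdWeight n j‖ ^ 2 - 1) ∧
    IsLeast
      {x : ℝ | ∃ I : Finset (Fin (n + 1)), I.card = a ∧ I ≠ J ∧
        x = ⟪∑ i ∈ I, stdWeight n i, ∑ j ∈ J, stdWeight n j⟫}
      (‖∑ j ∈ J, stdWeight n j‖ ^ 2 -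
        min (a : ℝ) ((n : ℝ) + 1 - (a : ℝ))) :=
  stmt6_general n a ha han J hJ
end

section
/- Let W ⊆ P be a finite subset that is invariant under the action of G and spans P as a real vector space. Then |W| ≥ r + 1. Moreover, if |W| = r + 1 then k = 1. -/
/-!
Group `W` by the set of factors on which an element is nonzero. If `w ∈ W` has support `S`, its
`G`-orbit contains the product of the orbits of its components, and a nonzero zero-sum vector of
`ℝ^{m+1}` is nonconstant, so its orbit under `S_{m+1}` has at least `m + 1` elements: a level set
of size `l` can be moved onto any `l`-subset, and `C(m+1, l) ≥ m + 1` for `0 < l < m + 1`.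
So every support `S` that occurs accounts for at least `∏_{i∈S} (nᵢ+1) ≥ 1 + ∑_{i∈S} nᵢ` elements.
As `W` spans `P`, the supports cover all factors, whence `|W| ≥ #supports + r ≥ r + 1`. Equality
forces a single support, namely all factors, and `∏ᵢ (nᵢ+1) > 1 + r` as soon as `k ≥ 2`.
-/

open scoped BigOperators

/-- The real vector space `P = V₁ × ⋯ × V_k`, where
`Vᵢ = {x ∈ ℝ^{nᵢ+1} : ∑ⱼ xⱼ = 0}`, realized as a submodule of
`∏ᵢ ℝ^{nᵢ+1}`.  It models the real weight space of the semisimple Lie algebra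
`sl_{n₁+1} × ⋯ × sl_{n_k+1}`. -/
def zeroSumSubmodule (k : ℕ) (n : Fin k → ℕ) :
    Submodule ℝ (∀ i : Fin k, Fin (n i + 1) → ℝ) where
  carrier := {x | ∀ i, ∑ j, x i j = 0}
  add_mem' := by
    intro x y hx hy i
    simp only [Pi.add_apply, Finset.sum_add_distrib, hx i, hy i, add_zero]
  zero_mem' := by
    intro i
    simp
  smul_mem' := by
    intro c x hx i
    simp only [Pi.smul_apply, smul_eq_mul, ← Finset.mul_sum, hx i, mul_zero]

open Finset Equiv
open scoped Pointwise

theorem Nat.self_le_choose {N m : ℕ} (hm : 0 < m) (hmN : m < N) : N ≤ N.choose m := by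
  induction N generalizing m with
  | zero => omega
  | succ N ih =>
    obtain rfl | hm1 : m = 1 ∨ 1 < m := by omega
    · simp
    obtain ⟨l, rfl⟩ : ∃ l, m = l + 1 := ⟨m - 1, by omega⟩
    rw [Nat.choose_succ_succ']
    have := ih (by omega : 0 < l) (by omega)
    have := Nat.choose_pos (show l + 1 ≤ N by omega)
    omega

theorem Finset.exists_perm_smul_eq {α : Type*} [DecidableEq α] {s t : Finset α}
    (h : s.card = t.card) : ∃ σ : Perm α, σ • s = t := by
  obtain ⟨σ, hσ⟩ := Set.powersetCard.isPretransitive.exists_smul_eq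
    (⟨s, h⟩ : Set.powersetCard α t.card) ⟨t, rfl⟩
  exact ⟨σ, congrArg Subtype.val hσ⟩

theorem card_le_card_image_comp_perm {α β : Type*} [Fintype α] [DecidableEq α] [DecidableEq β]
    {v : α → β} {a b : α} (hab : v a ≠ v b) :
    Fintype.card α ≤ (univ.image fun σ : Perm α => v ∘ σ).card := by
  set levelSet : (α → β) → Finset α := fun u => univ.filter (u · = v a)
  have ha : a ∈ levelSet v := by simp [levelSet]
  have hb : b ∉ levelSet v := by simpa [levelSet] using hab.symm
  have hsurj : powersetCard (levelSet v).card univ ⊆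
      (univ.image fun σ : Perm α => v ∘ σ).image levelSet := by
    intro T hT
    obtain ⟨σ, hσ⟩ := exists_perm_smul_eq (mem_powersetCard_univ.1 hT)
    refine mem_image.2 ⟨v ∘ σ, mem_image_of_mem _ (mem_univ σ), ?_⟩
    ext x
    rw [← smul_mem_smul_finset_iff σ (s := T), hσ]
    simp [levelSet]
  calc Fintype.card α ≤ (Fintype.card α).choose (levelSet v).card :=
        Nat.self_le_choose (card_pos.2 ⟨a, ha⟩) (card_lt_univ_of_notMem hb)
    _ = (powersetCard (levelSet v).card univ).card := by simp
    _ ≤ _ := (card_le_card hsurj).trans card_image_le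

theorem Finset.one_add_sum_le_prod_add_one {ι : Type*} (s : Finset ι) (f : ι → ℕ) :
    1 + ∑ i ∈ s, f i ≤ ∏ i ∈ s, (f i + 1) := by
  classical
  induction s using Finset.induction_on with
  | empty => simp
  | insert a s ha ih =>
    rw [sum_insert ha, prod_insert ha]
    nlinarith [Nat.mul_le_mul_left (f a + 1) ih, Nat.zero_le (f a * ∑ i ∈ s, f i)]

theorem Finset.one_add_sum_lt_prod_add_one {ι : Type*} [DecidableEq ι] {s : Finset ι}
    {f : ι → ℕ} {a b : ι} (ha : a ∈ s) (hb : b ∈ s) (hab : a ≠ b) (hfa : 0 < f a)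
    (hfb : 0 < f b) : 1 + ∑ i ∈ s, f i < ∏ i ∈ s, (f i + 1) := by
  rw [← add_sum_erase s f ha, ← mul_prod_erase s (f · + 1) ha]
  have hrest := one_add_sum_le_prod_add_one (s.erase a) f
  have hfb_le : f b ≤ ∑ i ∈ s.erase a, f i :=
    single_le_sum (fun i _ => Nat.zero_le (f i)) (mem_erase.2 ⟨hab.symm, hb⟩)
  nlinarith

theorem Finset.sum_le_sum_sum_of_forall_exists_mem {ι : Type*} [Fintype ι] [DecidableEq ι]
    {A : Finset (Finset ι)} (hA : ∀ i, ∃ s ∈ A, i ∈ s) (f : ι → ℕ) :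
    ∑ i, f i ≤ ∑ s ∈ A, ∑ i ∈ s, f i := by
  have hsup : A.sup id = univ := eq_univ_of_forall fun i => by
    obtain ⟨s, hs, hi⟩ := hA i
    exact mem_sup.2 ⟨s, hs, hi⟩
  rw [← hsup]
  exact A.apply_sup_le_sum (f := fun s => ∑ i ∈ s, f i) sum_empty
    (fun {s t} => (sum_union_inter (f := f)).symm ▸ Nat.le_add_right _ _)

theorem Finset.card_add_sum_le_sum_prod_add_one {ι : Type*} [Fintype ι] [DecidableEq ι]
    {A : Finset (Finset ι)} (hA : ∀ i, ∃ s ∈ A, i ∈ s) (f : ι → ℕ) :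
    A.card + ∑ i, f i ≤ ∑ s ∈ A, ∏ i ∈ s, (f i + 1) :=
  calc A.card + ∑ i, f i ≤ ∑ s ∈ A, (1 + ∑ i ∈ s, f i) := by
        rw [sum_add_distrib, card_eq_sum_ones]
        exact Nat.add_le_add_left (sum_le_sum_sum_of_forall_exists_mem hA f) _
    _ ≤ _ := sum_le_sum fun s _ => one_add_sum_le_prod_add_one s f

theorem Finset.one_add_sum_lt_sum_prod_add_one {ι : Type*} [Fintype ι] [DecidableEq ι]
    {A : Finset (Finset ι)} (hA : ∀ i, ∃ s ∈ A, i ∈ s) {f : ι → ℕ} {a b : ι} (hab : a ≠ b)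
    (hfa : 0 < f a) (hfb : 0 < f b) : 1 + ∑ i, f i < ∑ s ∈ A, ∏ i ∈ s, (f i + 1) := by
  have hbound := card_add_sum_le_sum_prod_add_one hA f
  obtain hA2 | hA1 : 2 ≤ A.card ∨ A.card ≤ 1 := by omega
  · omega
  obtain ⟨s, rfl⟩ : ∃ s, A = {s} :=
    card_eq_one.1 (le_antisymm hA1 (card_pos.2 ⟨_, (hA a).choose_spec.1⟩))
  have hs : s = univ := eq_univ_of_forall fun i => by simpa using hA i
  rw [sum_singleton, hs]
  exact one_add_sum_lt_prod_add_one (mem_univ a) (mem_univ b) hab hfa hfb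

theorem exists_ne_of_sum_eq_zero {α M : Type*} [Fintype α] [AddCommMonoid M] [IsAddTorsionFree M]
    {v : α → M} (hsum : ∑ j, v j = 0) (hv : v ≠ 0) : ∃ a b, v a ≠ v b := by
  obtain ⟨a, ha⟩ := Function.ne_iff.1 hv
  have : Nonempty α := ⟨a⟩
  by_contra! hconst
  rw [sum_congr rfl fun b _ => (hconst a b).symm, sum_const, card_univ] at hsum
  exact ha ((nsmul_eq_zero_iff.1 hsum).resolve_right Fintype.card_ne_zero)

theorem Submodule.exists_mem_apply_ne_zero_of_mem_span {R ι : Type*} {φ : ι → Type*} [Semiring R]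
    [∀ i, AddCommMonoid (φ i)] [∀ i, Module R (φ i)] {s : Set (∀ i, φ i)} {x : ∀ i, φ i}
    (hx : x ∈ span R s) {i : ι} (hxi : x i ≠ 0) : ∃ w ∈ s, w i ≠ 0 := by
  by_contra! h
  exact hxi <| LinearMap.mem_ker.1 <|
    (span_le (p := LinearMap.ker (LinearMap.proj i))).2 (fun w hw => LinearMap.mem_ker.2 (h w hw)) hx

theorem exists_mem_zeroSumSubmodule_apply_ne_zero {k : ℕ} {n : Fin k → ℕ} {i : Fin k}
    (hi : 1 ≤ n i) : ∃ x ∈ zeroSumSubmodule k n, x i ≠ 0 := by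
  refine ⟨Pi.single i (Pi.single 0 1 - Pi.single (Fin.last _) 1), fun i' => ?_, ?_⟩
  · obtain rfl | hi' := eq_or_ne i' i
    · simp
    · simp [hi']
  · have : NeZero (n i) := ⟨by omega⟩
    exact fun h => by simpa [(Fin.last_pos' (n := n i)).ne] using congrFun h 0

section FactorSupport

variable {ι : Type*} [Fintype ι] {α : ι → Type*} [∀ i, Fintype (α i)] {β : Type*} [Zero β]
  [DecidableEq β]

def factorSupport (w : ∀ i, α i → β) : Finset ι := univ.filter fun i => w i ≠ 0

@[simp]
theorem mem_factorSupport {w : ∀ i, α i → β} {i : ι} : i ∈ factorSupport w ↔ w i ≠ 0 := by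
  simp [factorSupport]

theorem factorSupport_comp_perm (w : ∀ i, α i → β) (σ : ∀ i, Perm (α i)) :
    factorSupport (fun i => w i ∘ σ i) = factorSupport w := by
  ext i
  simp only [mem_factorSupport, not_iff_not]
  exact (σ i).surjective.injective_comp_right.eq_iff' rfl

variable [DecidableEq ι] [∀ i, DecidableEq (α i)] {W : Finset (∀ i, α i → β)}
  (hW : ∀ w ∈ W, ∀ σ : ∀ i, Perm (α i), (fun i j => w i (σ i j)) ∈ W)
include hW

theorem prod_card_le_card_filter_factorSupport_eq {w : ∀ i, α i → β} (hw : w ∈ W)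
    (hnc : ∀ i, w i ≠ 0 → ∃ a b, w i a ≠ w i b) :
    ∏ i ∈ factorSupport w, Fintype.card (α i) ≤
      (W.filter (factorSupport · = factorSupport w)).card := by
  set orbit : ∀ i, Finset (α i → β) := fun i => univ.image fun σ : Perm (α i) => w i ∘ σ
  have hsub : Fintype.piFinset orbit ⊆ W.filter (factorSupport · = factorSupport w) := by
    intro x hx
    choose σ hσ using fun i => mem_image.1 (Fintype.mem_piFinset.1 hx i)
    obtain rfl : (fun i => w i ∘ σ i) = x := funext fun i => (hσ i).2
    exact mem_filter.2 ⟨hW w hw σ, factorSupport_comp_perm w σ⟩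
  calc ∏ i ∈ factorSupport w, Fintype.card (α i) ≤ ∏ i ∈ factorSupport w, (orbit i).card :=
        prod_le_prod' fun i hi =>
          let ⟨_, _, hab⟩ := hnc i (mem_factorSupport.1 hi)
          card_le_card_image_comp_perm hab
    _ ≤ ∏ i, (orbit i).card := prod_le_prod_of_subset_of_one_le' (subset_univ _)
        fun i _ _ => card_pos.2 ⟨w i, mem_image.2 ⟨1, mem_univ _, rfl⟩⟩
    _ = (Fintype.piFinset orbit).card := (Fintype.card_piFinset orbit).symm
    _ ≤ _ := card_le_card hsub

theorem sum_prod_card_le_card (hnc : ∀ w ∈ W, ∀ i, w i ≠ 0 → ∃ a b, w i a ≠ w i b) :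
    ∑ s ∈ W.image factorSupport, ∏ i ∈ s, Fintype.card (α i) ≤ W.card := by
  rw [card_eq_sum_card_image factorSupport W]
  refine sum_le_sum fun s hs => ?_
  obtain ⟨w, hw, rfl⟩ := mem_image.1 hs
  exact prod_card_le_card_filter_factorSupport_eq hW hw (hnc w hw)

end FactorSupport

/-- Fix `k ≥ 1`, integers `n₁,…,n_k ≥ 1` and `r = n₁ + ⋯ + n_k`.
Let the product of symmetric groups `S_{n₁+1} × ⋯ × S_{n_k+1}` act on
`P = V₁ × ⋯ × V_k` by permuting coordinates within each factor.  If `W ⊆ P` is a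
finite subset invariant under this action which spans `P` over `ℝ`, then
`|W| ≥ r + 1`, and if `|W| = r + 1` then `k = 1`. -/
theorem stmt9 (k : ℕ) (hk : 1 ≤ k) (n : Fin k → ℕ) (hn : ∀ i, 1 ≤ n i)
    (W : Finset (∀ i : Fin k, Fin (n i + 1) → ℝ))
    (hWP : ∀ w ∈ W, w ∈ zeroSumSubmodule k n)
    (hWinv : ∀ w ∈ W, ∀ σ : ∀ i : Fin k, Equiv.Perm (Fin (n i + 1)),
      (fun i j => w i (σ i j)) ∈ W)
    (hWspan : Submodule.span ℝ (W : Set (∀ i : Fin k, Fin (n i + 1) → ℝ)) =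
      zeroSumSubmodule k n) :
    (∑ i, n i) + 1 ≤ W.card ∧ (W.card = (∑ i, n i) + 1 → k = 1) := by
  classical
  have hcover : ∀ i, ∃ s ∈ W.image factorSupport, i ∈ s := fun i => by
    obtain ⟨x, hxP, hxi⟩ := exists_mem_zeroSumSubmodule_apply_ne_zero (hn i)
    obtain ⟨w, hw, hwi⟩ := Submodule.exists_mem_apply_ne_zero_of_mem_span (hWspan ▸ hxP) hxi
    exact ⟨_, mem_image_of_mem _ hw, mem_factorSupport.2 hwi⟩
  have hcount : ∑ s ∈ W.image factorSupport, ∏ i ∈ s, (n i + 1) ≤ W.card := by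
    simpa using sum_prod_card_le_card hWinv
      fun w hw i hwi => exists_ne_of_sum_eq_zero (hWP w hw i) hwi
  have hsupports : 1 ≤ (W.image factorSupport).card :=
    card_pos.2 ⟨_, (hcover ⟨0, hk⟩).choose_spec.1⟩
  refine ⟨by linarith [card_add_sum_le_sum_prod_add_one hcover n], fun hcard => ?_⟩
  by_contra hk1
  have h01 : (⟨0, hk⟩ : Fin k) ≠ ⟨1, by omega⟩ := by simp
  have := one_add_sum_lt_sum_prod_add_one hcover h01 (hn _) (hn _)
  omega
end

section
/- Let k ≥ 1 and let h₁,…,h_k be finite-dimensional semisimple Lie algebras over K; set h = h₁ × ⋯ × h_k (the product Lie algebra). Let f ⊆ h be a Lie subalgebra that is itself a semisimple Lie algebra and such that for every 1 ≤ i ≤ k the induced projection map f → h_i is surjective. If rank f = rank h, then f = h. -/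
open DirectSum

/-- A finite product (= direct sum) of finite-dimensional Lie algebras is a
finite module. -/
instance directSum_module_finite (K : Type*) [Field K] {k : ℕ}
    (H : Fin k → Type*) [∀ i, LieRing (H i)] [∀ i, LieAlgebra K (H i)]
    [∀ i, Module.Finite K (H i)] : Module.Finite K (⨁ i, H i) :=
  Module.Finite.equiv (DirectSum.linearEquivFunOnFintype K (Fin k) H).symm

/-- A Lie subalgebra of a finite-dimensional Lie algebra is finite-dimensional. -/
instance lieSubalgebra_module_finite (K : Type*) [Field K] {L : Type*}
    [LieRing L] [LieAlgebra K L] [Module.Finite K L] (f : LieSubalgebra K L) :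
    Module.Finite K f :=
  FiniteDimensional.finiteDimensional_submodule f.toSubmodule

/-!
Pick `x ∈ f` regular in `f` whose components `xᵢ` are regular in the `hᵢ`: each condition says
that a non-zero polynomial on `f` does not vanish at `x` (non-zero for `hᵢ` because `f ↠ hᵢ`).
The Engel subalgebra of `x` in `h` is the product of those of the `xᵢ`, so `x` is regular in `h`;
it contains the Engel subalgebra of `x` in `f`, and both have dimension `rank f = rank h`, so it
lies in `f`. Then `f ∩ hᵢ`, an ideal of `hᵢ` since `f ↠ hᵢ`, contains the Engel subalgebra `E`
of `xᵢ`. A complementary ideal commutes with `f ∩ hᵢ`, so it normalizes `E`, hence lies in the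
self-normalizing `E ⊆ f ∩ hᵢ` and is zero. Thus `hᵢ ⊆ f` for every `i`.
-/

open Module LieAlgebra LieSubalgebra

namespace LinearMap

variable {R L M : Type*} [CommRing R] [IsDomain R] [Infinite R]
  [AddCommGroup L] [Module R L] [Module.Finite R L] [Module.Free R L]
  [AddCommGroup M] [Module R M] [Module.Finite R M] [Module.Free R M]

lemma nilRank_comp_of_surjective {L' : Type*} [AddCommGroup L'] [Module R L']
    [Module.Finite R L'] [Module.Free R L'] (φ : L →ₗ[R] End R M) {π : L' →ₗ[R] L}
    (hπ : Function.Surjective π) :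
    nilRank (φ ∘ₗ π) = nilRank φ := by
  obtain ⟨x, hx⟩ := exists_isNilRegular φ
  obtain ⟨x', rfl⟩ := hπ x
  obtain ⟨y', hy'⟩ := exists_isNilRegular (φ ∘ₗ π)
  rw [isNilRegular_iff_natTrailingDegree_charpoly_eq_nilRank] at hx hy'
  apply le_antisymm
  · exact hx ▸ nilRank_le_natTrailingDegree_charpoly (φ ∘ₗ π) x'
  · exact hy' ▸ nilRank_le_natTrailingDegree_charpoly φ (π y')

lemma isNilRegular_comp_iff_of_surjective {L' : Type*} [AddCommGroup L'] [Module R L']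
    [Module.Finite R L'] [Module.Free R L'] (φ : L →ₗ[R] End R M) {π : L' →ₗ[R] L}
    (hπ : Function.Surjective π) (x : L') :
    IsNilRegular (φ ∘ₗ π) x ↔ IsNilRegular φ (π x) := by
  rw [isNilRegular_def, isNilRegular_def, nilRank_comp_of_surjective φ hπ, comp_apply]

open MvPolynomial in
lemma exists_isNilRegular_and_forall_isNilRegular {ι : Type*} [Fintype ι] {N : ι → Type*}
    [∀ i, AddCommGroup (N i)] [∀ i, Module R (N i)] [∀ i, Module.Finite R (N i)]
    [∀ i, Module.Free R (N i)] (φ : L →ₗ[R] End R M) (ψ : ∀ i, L →ₗ[R] End R (N i)) :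
    ∃ x, IsNilRegular φ x ∧ ∀ i, IsNilRegular (ψ i) x := by
  classical
  let b := Free.chooseBasis R L
  let P := (polyCharpoly φ b).coeff (nilRank φ) *
    ∏ i, (polyCharpoly (ψ i) b).coeff (nilRank (ψ i))
  have hP : P ≠ 0 := mul_ne_zero (polyCharpoly_coeff_nilRank_ne_zero φ b)
    (Finset.prod_ne_zero_iff.2 fun i _ => polyCharpoly_coeff_nilRank_ne_zero (ψ i) b)
  obtain ⟨v, hv⟩ : ∃ v, eval v P ≠ 0 := by
    by_contra! h
    exact hP (MvPolynomial.funext (by simpa using h))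
  refine ⟨b.repr.symm (Finsupp.equivFunOnFinite.symm v), ?_⟩
  simp only [isNilRegular_iff_coeff_polyCharpoly_nilRank_ne_zero _ b,
    LinearEquiv.apply_symm_apply, Finsupp.coe_equivFunOnFinite_symm]
  simpa [P, Finset.prod_ne_zero_iff] using hv

end LinearMap

lemma LieAlgebra.exists_isRegular_forall_isRegular_of_surjective {K L : Type*} [Field K]
    [Infinite K] [LieRing L] [LieAlgebra K L] [Module.Finite K L] {ι : Type*} [Fintype ι]
    {H : ι → Type*} [∀ i, LieRing (H i)] [∀ i, LieAlgebra K (H i)] [∀ i, Module.Finite K (H i)]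
    (π : ∀ i, L →ₗ[K] H i) (hπ : ∀ i, Function.Surjective (π i)) :
    ∃ x : L, IsRegular K x ∧ ∀ i, IsRegular K (π i x) := by
  obtain ⟨x, hx, hxπ⟩ := LinearMap.exists_isNilRegular_and_forall_isNilRegular
    (ad K L : L →ₗ[K] End K L) (fun i => (ad K (H i) : H i →ₗ[K] End K (H i)) ∘ₗ π i)
  exact ⟨x, hx, fun i => (LinearMap.isNilRegular_comp_iff_of_surjective _ (hπ i) x).1 (hxπ i)⟩

lemma LieSubalgebra.engel_le_of_finrank_engel_le {K L : Type*} [Field K] [LieRing L]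
    [LieAlgebra K L] [Module.Finite K L] (f : LieSubalgebra K L) (x : f)
    (h : finrank K (engel K (x : L)) ≤ finrank K (engel K x)) : engel K (x : L) ≤ f := by
  let E := (engel K x).toSubmodule.map f.toSubmodule.subtype
  have hE : E ≤ (engel K (x : L)).toSubmodule := by
    rintro _ ⟨z, hz, rfl⟩
    obtain ⟨n, hn⟩ := (mem_engel_iff K x z).1 hz
    exact (mem_engel_iff K _ _).2 ⟨n, by simpa [coe_ad_pow] using congrArg Subtype.val hn⟩
  have hE_eq : E = (engel K (x : L)).toSubmodule :=
    Submodule.eq_of_le_of_finrank_le hE (by rwa [Submodule.finrank_map_subtype_eq])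
  intro z hz
  rw [← mem_toSubmodule, ← hE_eq] at hz
  obtain ⟨w, -, rfl⟩ := hz
  exact w.2

lemma LieIdeal.eq_top_of_engel_le {R L : Type*} [CommRing R] [LieRing L] [LieAlgebra R L]
    [LieAlgebra.IsSemisimple R L] (J : LieIdeal R L) (x : L) (h : ∀ w ∈ engel R x, w ∈ J) :
    J = ⊤ := by
  obtain ⟨J', hJ'⟩ := exists_isCompl J
  have hJ'_le : ∀ y ∈ J', y ∈ engel R x := by
    intro y hy
    rw [← normalizer_engel, mem_normalizer_iff]
    intro w hw
    have hyw : ⁅y, w⁆ ∈ J ⊓ J' :=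
      ⟨J.lie_mem (h w hw), by rw [← lie_skew]; exact neg_mem (J'.lie_mem hy)⟩
    rw [hJ'.inf_eq_bot, LieSubmodule.mem_bot] at hyw
    exact hyw ▸ (engel R x).zero_mem
  have hJ'_bot : J' = ⊥ := eq_bot_iff.2 fun y hy => by
    simpa [hJ'.inf_eq_bot] using (show y ∈ J ⊓ J' from ⟨h y (hJ'_le y hy), hy⟩)
  simpa [hJ'_bot] using hJ'.sup_eq_top

namespace DirectSum

section CommRing

variable {R ι : Type*} [CommRing R] {L : ι → Type*} [∀ i, LieRing (L i)]
  [∀ i, LieAlgebra R (L i)]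

lemma ad_pow_apply (y z : ⨁ i, L i) (n : ℕ) (i : ι) :
    ((ad R (⨁ i, L i) y ^ n) z) i = (ad R (L i) (y i) ^ n) (z i) := by
  induction n generalizing z with
  | zero => rfl
  | succ n ih => simp only [pow_succ, Module.End.mul_apply, ih, ad_apply, bracket_apply]

lemma lie_of_right [DecidableEq ι] (y : ⨁ i, L i) (i : ι) (a : L i) :
    ⁅y, of L i a⁆ = of L i ⁅y i, a⁆ := by
  ext j
  rw [bracket_apply]
  rcases eq_or_ne i j with rfl | hij
  · rw [of_eq_same, of_eq_same]
  · rw [of_eq_of_ne _ _ _ hij.symm, of_eq_of_ne _ _ _ hij.symm, lie_zero]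

variable [Fintype ι]

lemma mem_engel_iff {y z : ⨁ i, L i} : z ∈ engel R y ↔ ∀ i, z i ∈ engel R (y i) := by
  simp only [LieSubalgebra.mem_engel_iff]
  constructor
  · rintro ⟨n, hn⟩ i
    exact ⟨n, by rw [← ad_pow_apply, hn, zero_apply]⟩
  · intro h
    choose n hn using h
    refine ⟨∑ i, n i, DirectSum.ext fun i => ?_⟩
    rw [ad_pow_apply, zero_apply]
    exact Module.End.pow_map_zero_of_le
      (Finset.single_le_sum (by simp) (Finset.mem_univ i)) (hn i)

@[simp]
lemma linearEquivFunOnFintype_symm_apply (g : ∀ i, L i) (i : ι) :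
    (linearEquivFunOnFintype R ι L).symm g i = g i :=
  rfl

def engelEquivPi (y : ⨁ i, L i) : engel R y ≃ₗ[R] Π i, engel R (y i) where
  toFun z i := ⟨(z : ⨁ i, L i) i, mem_engel_iff.1 z.2 i⟩
  map_add' _ _ := rfl
  map_smul' _ _ := rfl
  invFun w :=
    ⟨(linearEquivFunOnFintype R ι L).symm fun i => w i, mem_engel_iff.2 fun i => (w i).2⟩
  left_inv z := Subtype.ext (DirectSum.ext fun i => by simp)
  right_inv w := funext fun i => Subtype.ext (by simp)

lemma of_mem_engel [DecidableEq ι] {y : ⨁ i, L i} {i : ι} {a : L i} (ha : a ∈ engel R (y i)) :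
    of L i a ∈ engel R y := by
  refine mem_engel_iff.2 fun j => ?_
  rcases eq_or_ne i j with rfl | hij
  · rwa [of_eq_same]
  · rw [of_eq_of_ne _ _ _ hij.symm]
    exact zero_mem _

lemma of_mem_of_engel_le [DecidableEq ι] {f : LieSubalgebra R (⨁ i, L i)} {i : ι}
    [LieAlgebra.IsSemisimple R (L i)] (hf : Function.Surjective fun x : f => (x : ⨁ i, L i) i)
    {y : ⨁ i, L i} (hy : engel R y ≤ f) (a : L i) : of L i a ∈ f := by
  let J : LieIdeal R (L i) :=
    { f.toSubmodule.comap (lof R ι L i) with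
      lie_mem := by
        rintro c b (hb : of L i b ∈ f)
        obtain ⟨z, rfl⟩ := hf c
        change of L i ⁅(z : ⨁ i, L i) i, b⁆ ∈ f
        rw [← lie_of_right]
        exact f.lie_mem z.2 hb }
  have hJ : J = ⊤ := LieIdeal.eq_top_of_engel_le J (y i) fun w hw => hy (of_mem_engel hw)
  exact (hJ ▸ LieSubmodule.mem_top a : a ∈ J)

end CommRing

variable {K ι : Type*} [Field K] [Fintype ι] {H : ι → Type*}
  [∀ i, LieRing (H i)] [∀ i, LieAlgebra K (H i)] [∀ i, Module.Finite K (H i)]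

lemma finrank_engel (y : ⨁ i, H i) :
    finrank K (engel K y) = ∑ i, finrank K (engel K (y i)) := by
  rw [(engelEquivPi y).finrank_eq, Module.finrank_pi_fintype]

variable [Infinite K]

lemma rank_eq_sum_rank : rank K (⨁ i, H i) = ∑ i, rank K (H i) := by
  apply le_antisymm
  · choose u hu using fun i => exists_isRegular K (H i)
    calc rank K (⨁ i, H i)
        ≤ finrank K (engel K ((linearEquivFunOnFintype K ι H).symm u)) :=
          rank_le_finrank_engel K _
      _ = ∑ i, rank K (H i) := by
        simp only [finrank_engel, linearEquivFunOnFintype_symm_apply]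
        exact Finset.sum_congr rfl fun i _ => (isRegular_iff_finrank_engel_eq_rank K _).1 (hu i)
  · obtain ⟨y, hy⟩ := exists_isRegular K (⨁ i, H i)
    calc ∑ i, rank K (H i) ≤ ∑ i, finrank K (engel K (y i)) :=
          Finset.sum_le_sum fun i _ => rank_le_finrank_engel K (y i)
      _ = rank K (⨁ i, H i) := by
        rw [← finrank_engel, (isRegular_iff_finrank_engel_eq_rank K y).1 hy]

lemma isRegular_iff {y : ⨁ i, H i} : IsRegular K y ↔ ∀ i, IsRegular K (y i) := by
  simp only [isRegular_iff_finrank_engel_eq_rank, finrank_engel, rank_eq_sum_rank]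
  rw [eq_comm, Finset.sum_eq_sum_iff_of_le fun i _ => rank_le_finrank_engel K (y i)]
  simp only [Finset.mem_univ, true_implies, eq_comm]

end DirectSum

theorem stmt10_general (K : Type*) [Field K] [CharZero K] (k : ℕ)
    (H : Fin k → Type*) [∀ i, LieRing (H i)] [∀ i, LieAlgebra K (H i)]
    [∀ i, Module.Finite K (H i)] [∀ i, LieAlgebra.IsSemisimple K (H i)]
    (f : LieSubalgebra K (⨁ i, H i))
    (hsurj : ∀ i : Fin k, Function.Surjective
      (fun x : f => ((x : ⨁ i, H i)) i))
    (hrank : LieAlgebra.rank K f = LieAlgebra.rank K (⨁ i, H i)) :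
    f = ⊤ := by
  obtain ⟨x, hxf, hxH⟩ := exists_isRegular_forall_isRegular_of_surjective
    (L := f) (fun i => component K (Fin k) H i ∘ₗ f.incl.toLinearMap) hsurj
  have hx : IsRegular K (x : ⨁ i, H i) := DirectSum.isRegular_iff.2 hxH
  have hengel : engel K (x : ⨁ i, H i) ≤ f := f.engel_le_of_finrank_engel_le x <| by
    rw [(isRegular_iff_finrank_engel_eq_rank K _).1 hx,
      (isRegular_iff_finrank_engel_eq_rank K x).1 hxf, hrank]
  rw [eq_top_iff]
  rintro z -
  rw [← sum_univ_of z]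
  exact sum_mem fun i _ => DirectSum.of_mem_of_engel_le (hsurj i) hengel (z i)

/-- Let `K` be a field of characteristic zero, `k ≥ 1`, and
`h₁,…,h_k` finite-dimensional semisimple Lie algebras over `K`; let
`h = h₁ × ⋯ × h_k` be the product Lie algebra. If `f ⊆ h` is a Lie subalgebra
which is itself semisimple and such that each induced projection `f → hᵢ` is
surjective, and `rank f = rank h`, then `f = h`. -/
theorem stmt10 (K : Type*) [Field K] [CharZero K] (k : ℕ) (hk : 1 ≤ k)
    (H : Fin k → Type*) [∀ i, LieRing (H i)] [∀ i, LieAlgebra K (H i)]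
    [∀ i, Module.Finite K (H i)] [∀ i, LieAlgebra.IsSemisimple K (H i)]
    (f : LieSubalgebra K (⨁ i, H i))
    [LieAlgebra.IsSemisimple K f]
    (hsurj : ∀ i : Fin k, Function.Surjective
      (fun x : f => ((x : ⨁ i, H i)) i))
    (hrank : LieAlgebra.rank K f = LieAlgebra.rank K (⨁ i, H i)) :
    f = ⊤ :=
  stmt10_general K k H f hsurj hrank
end
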